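/- arXiv:0901.3056 — 3 statements merged into one kernel-verified Lean document; each statement's English description precedes it below -/
import Mathlib

section
/- The set V_A of strictly positive probability mass functions on a finite alphabet A, equipped with addition p ⊞ q := (1/Z) p(x)q(x) (Z a normalizing constant) and scalar multiplication α ⊡ p := (1/Z) p(x)^α, forms a vector space over ℝ. -/
open Finset

/-- A strictly positive probability mass function on a finite alphabet. -/
def IsPPMF {A : Type*} [Fintype A] (p : A → ℝ) : Prop :=
  (∀ x, 0 < p x) ∧ ∑ x, p x = 1

/-- Addition of PMFs: normalized pointwise product. -/
noncomputable def padd {A : Type*} [Fintype A] (p q : A → ℝ) : A → ℝ :=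
  fun x => p x * q x / ∑ y, p y * q y

/-- Scalar multiplication of PMFs: normalized pointwise real power. -/
noncomputable def psmul {A : Type*} [Fintype A] (α : ℝ) (p : A → ℝ) : A → ℝ :=
  fun x => p x ^ α / ∑ y, p y ^ α

/-- The uniform PMF, the zero vector of the PMF vector space. -/
noncomputable def unif (A : Type*) [Fintype A] : A → ℝ :=
  fun _ => (Fintype.card A : ℝ)⁻¹

/-- The isometric map L from PMFs to ℝ^|A|. -/
noncomputable def Lmap {A : Type*} [Fintype A] (p : A → ℝ) : A → ℝ :=
  fun x => Real.log (p x ^ (Fintype.card A) / ∏ y, p y)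

/-! Each operation is a pointwise operation on positive functions (product, real power, the
constant `1`) followed by normalization to total mass one. Normalization is insensitive to
a nonzero scalar factor, so the intermediate normalizations can all be moved to the very end,
and every axiom reduces to an identity between positive reals such as
`(a * b) ^ α = a ^ α * b ^ α`. -/

section

variable {A : Type*} [Fintype A]

noncomputable def normalized (f : A → ℝ) : A → ℝ := (∑ x, f x)⁻¹ • f

lemma padd_eq_normalized (p q : A → ℝ) : padd p q = normalized (p * q) := by
  funext x
  simp [padd, normalized, div_eq_inv_mul]

lemma psmul_eq_normalized (α : ℝ) (p : A → ℝ) : psmul α p = normalized (p ^ α) := by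
  funext x
  simp [psmul, normalized, div_eq_inv_mul]

lemma unif_eq_normalized_one : unif A = normalized 1 := by
  funext x
  simp [unif, normalized]

lemma normalized_smul (f : A → ℝ) {c : ℝ} (hc : c ≠ 0) :
    normalized (c • f) = normalized f := by
  simp only [normalized, Pi.smul_apply, smul_eq_mul, ← mul_sum, smul_smul, mul_inv]
  rw [mul_right_comm, inv_mul_cancel₀ hc, one_mul]

lemma normalized_mul_left (f g : A → ℝ) (hf : ∑ x, f x ≠ 0) :
    normalized (normalized f * g) = normalized (f * g) := by
  rw [normalized.eq_def f, smul_mul_assoc, normalized_smul _ (inv_ne_zero hf)]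

lemma normalized_mul_right (f g : A → ℝ) (hg : ∑ x, g x ≠ 0) :
    normalized (f * normalized g) = normalized (f * g) := by
  rw [mul_comm, normalized_mul_left _ _ hg, mul_comm]

lemma normalized_rpow (f : A → ℝ) (hf : 0 ≤ f) (hsum : 0 < ∑ x, f x) (α : ℝ) :
    normalized (normalized f ^ α) = normalized (f ^ α) := by
  have hscale : normalized f ^ α = ((∑ x, f x) ^ α)⁻¹ • f ^ α := by
    funext x
    simp only [normalized, Pi.smul_apply, Pi.pow_apply, smul_eq_mul]
    rw [Real.mul_rpow (inv_nonneg.2 hsum.le) (hf x), Real.inv_rpow hsum.le]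
  rw [hscale, normalized_smul _ (inv_ne_zero (Real.rpow_pos_of_pos hsum α).ne')]

lemma IsPPMF.normalized_eq {p : A → ℝ} (hp : IsPPMF p) : normalized p = p := by
  rw [normalized, hp.2, inv_one, one_smul]

lemma padd_comm (p q : A → ℝ) : padd p q = padd q p := by
  rw [padd_eq_normalized, padd_eq_normalized, mul_comm]

lemma one_psmul {p : A → ℝ} (hp : IsPPMF p) : psmul 1 p = p := by
  have hpow : p ^ (1 : ℝ) = p := by
    funext x
    simp
  rw [psmul_eq_normalized, hpow, hp.normalized_eq]

variable [Nonempty A] {p q r : A → ℝ}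

lemma sum_pos_of_forall_pos {f : A → ℝ} (hf : ∀ x, 0 < f x) : 0 < ∑ x, f x :=
  sum_pos (fun x _ => hf x) univ_nonempty

lemma isPPMF_normalized {f : A → ℝ} (hf : ∀ x, 0 < f x) : IsPPMF (normalized f) := by
  have hsum := sum_pos_of_forall_pos hf
  refine ⟨fun x => mul_pos (inv_pos.2 hsum) (hf x), ?_⟩
  simp only [normalized, Pi.smul_apply, smul_eq_mul, ← mul_sum, inv_mul_cancel₀ hsum.ne']

lemma isPPMF_padd (hp : ∀ x, 0 < p x) (hq : ∀ x, 0 < q x) : IsPPMF (padd p q) := by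
  rw [padd_eq_normalized]
  exact isPPMF_normalized fun x => mul_pos (hp x) (hq x)

lemma isPPMF_psmul (α : ℝ) (hp : ∀ x, 0 < p x) : IsPPMF (psmul α p) := by
  rw [psmul_eq_normalized]
  exact isPPMF_normalized fun x => Real.rpow_pos_of_pos (hp x) α

lemma isPPMF_unif : IsPPMF (unif A) := by
  rw [unif_eq_normalized_one]
  exact isPPMF_normalized fun _ => one_pos

lemma padd_assoc (hp : ∀ x, 0 < p x) (hq : ∀ x, 0 < q x) (hr : ∀ x, 0 < r x) :
    padd (padd p q) r = padd p (padd q r) := by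
  have hpq : ∑ x, (p * q) x ≠ 0 := (sum_pos_of_forall_pos fun x => mul_pos (hp x) (hq x)).ne'
  have hqr : ∑ x, (q * r) x ≠ 0 := (sum_pos_of_forall_pos fun x => mul_pos (hq x) (hr x)).ne'
  simp only [padd_eq_normalized]
  rw [normalized_mul_left _ _ hpq, normalized_mul_right _ _ hqr, mul_assoc]

lemma padd_unif (hp : IsPPMF p) : padd p (unif A) = p := by
  rw [padd_eq_normalized, unif_eq_normalized_one,
    normalized_mul_right p 1 (sum_pos_of_forall_pos fun _ => one_pos).ne', mul_one,
    hp.normalized_eq]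

lemma padd_psmul_neg_one (hp : ∀ x, 0 < p x) : padd p (psmul (-1) p) = unif A := by
  have hinv : p * p ^ (-1 : ℝ) = 1 := by
    funext x
    simp [Real.rpow_neg_one, mul_inv_cancel₀ (hp x).ne']
  have hsum : ∑ x, (p ^ (-1 : ℝ)) x ≠ 0 :=
    (sum_pos_of_forall_pos fun x => Real.rpow_pos_of_pos (hp x) _).ne'
  rw [padd_eq_normalized, psmul_eq_normalized, normalized_mul_right _ _ hsum, hinv,
    unif_eq_normalized_one]

lemma psmul_psmul (α β : ℝ) (hp : ∀ x, 0 < p x) :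
    psmul α (psmul β p) = psmul (α * β) p := by
  have hpos : ∀ x, 0 < (p ^ β) x := fun x => Real.rpow_pos_of_pos (hp x) β
  have hpow : (p ^ β) ^ α = p ^ (α * β) := by
    funext x
    simp [← Real.rpow_mul (hp x).le, mul_comm]
  simp only [psmul_eq_normalized]
  rw [normalized_rpow _ (fun x => (hpos x).le) (sum_pos_of_forall_pos hpos), hpow]

lemma psmul_padd (α : ℝ) (hp : ∀ x, 0 < p x) (hq : ∀ x, 0 < q x) :
    psmul α (padd p q) = padd (psmul α p) (psmul α q) := by
  have hpq : ∀ x, 0 < (p * q) x := fun x => mul_pos (hp x) (hq x)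
  have hpow : (p * q) ^ α = p ^ α * q ^ α := by
    funext x
    simp [Real.mul_rpow (hp x).le (hq x).le]
  have hpα : ∑ x, (p ^ α) x ≠ 0 :=
    (sum_pos_of_forall_pos fun x => Real.rpow_pos_of_pos (hp x) α).ne'
  have hqα : ∑ x, (q ^ α) x ≠ 0 :=
    (sum_pos_of_forall_pos fun x => Real.rpow_pos_of_pos (hq x) α).ne'
  simp only [psmul_eq_normalized, padd_eq_normalized]
  rw [normalized_rpow _ (fun x => (hpq x).le) (sum_pos_of_forall_pos hpq), hpow,
    normalized_mul_left _ _ hpα, normalized_mul_right _ _ hqα]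

lemma add_psmul (α β : ℝ) (hp : ∀ x, 0 < p x) :
    psmul (α + β) p = padd (psmul α p) (psmul β p) := by
  have hpow : p ^ (α + β) = p ^ α * p ^ β := by
    funext x
    simp [Real.rpow_add (hp x)]
  have hpα : ∑ x, (p ^ α) x ≠ 0 :=
    (sum_pos_of_forall_pos fun x => Real.rpow_pos_of_pos (hp x) α).ne'
  have hpβ : ∑ x, (p ^ β) x ≠ 0 :=
    (sum_pos_of_forall_pos fun x => Real.rpow_pos_of_pos (hp x) β).ne'
  simp only [psmul_eq_normalized, padd_eq_normalized]
  rw [normalized_mul_left _ _ hpα, normalized_mul_right _ _ hpβ, hpow]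

end

/-- The set of strictly positive PMFs on a finite alphabet `A`, with addition
`padd` and scalar multiplication `psmul` (zero vector the uniform PMF), forms a
vector space over ℝ: it is closed under the operations and all the vector space
axioms hold. -/
theorem stmt_0 {A : Type*} [Fintype A] (hA : 2 ≤ Fintype.card A) :
    (∀ p q : A → ℝ, IsPPMF p → IsPPMF q → IsPPMF (padd p q)) ∧
    (∀ (α : ℝ) (p : A → ℝ), IsPPMF p → IsPPMF (psmul α p)) ∧
    IsPPMF (unif A) ∧
    (∀ p q : A → ℝ, IsPPMF p → IsPPMF q → padd p q = padd q p) ∧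
    (∀ p q r : A → ℝ, IsPPMF p → IsPPMF q → IsPPMF r →
      padd (padd p q) r = padd p (padd q r)) ∧
    (∀ p : A → ℝ, IsPPMF p → padd p (unif A) = p) ∧
    (∀ p : A → ℝ, IsPPMF p → padd p (psmul (-1) p) = unif A) ∧
    (∀ p : A → ℝ, IsPPMF p → psmul 1 p = p) ∧
    (∀ (α β : ℝ) (p : A → ℝ), IsPPMF p → psmul α (psmul β p) = psmul (α * β) p) ∧
    (∀ (α : ℝ) (p q : A → ℝ), IsPPMF p → IsPPMF q →
      psmul α (padd p q) = padd (psmul α p) (psmul α q)) ∧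
    (∀ (α β : ℝ) (p : A → ℝ), IsPPMF p →
      psmul (α + β) p = padd (psmul α p) (psmul β p)) := by
  have : Nonempty A := Fintype.card_pos_iff.mp (by omega)
  exact ⟨fun p q hp hq => isPPMF_padd hp.1 hq.1,
    fun α p hp => isPPMF_psmul α hp.1,
    isPPMF_unif,
    fun p q _ _ => padd_comm p q,
    fun p q r hp hq hr => padd_assoc hp.1 hq.1 hr.1,
    fun p hp => padd_unif hp,
    fun p hp => padd_psmul_neg_one hp.1,
    fun p hp => one_psmul hp,
    fun α β p hp => psmul_psmul α β hp.1,
    fun α p q hp hq => psmul_padd α hp.1 hq.1,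
    fun α β p hp => add_psmul α β hp.1⟩
end

section
/- The range of the map L : V_A → ℝ^{|A|}, L(p)_i = log( p(x_i)^{|A|} / Π_y p(y) ), is exactly the hyperplane { v ∈ ℝ^{|A|} : Σ_i v_i = 0 }; consequently, the vector space V_A of strictly positive PMFs on A has dimension |A| − 1. -/
open Finset

/-- The coordinate-sum functional on ℝ^A, as a linear map. -/
def sumLM (A : Type*) [Fintype A] : (A → ℝ) →ₗ[ℝ] ℝ where
  toFun v := ∑ i, v i
  map_add' := by intro u v; simp [Finset.sum_add_distrib]
  map_smul' := by intro c v; simp [Finset.mul_sum]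

/-!
`L p` is the centred log-likelihood vector `|A| log p - ∑ log p`, so its coordinates sum to
zero, and it is unchanged when `p` is rescaled. Conversely, a zero-sum `v` is `L` of the
positive function `exp (v / |A|)`, hence also of its normalization, which is a PMF.
The dimension count is rank–nullity for the surjective functional `v ↦ ∑ v`.
-/

section Lmap

variable {A : Type*} [Fintype A]

theorem Lmap_apply_of_pos {p : A → ℝ} (hp : ∀ x, 0 < p x) (x : A) :
    Lmap p x = Fintype.card A * Real.log (p x) - ∑ y, Real.log (p y) := by
  rw [Lmap, Real.log_div (pow_pos (hp x) _).ne' (prod_pos fun y _ => hp y).ne', Real.log_pow,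
    Real.log_prod fun y _ => (hp y).ne']

theorem sum_Lmap_eq_zero {p : A → ℝ} (hp : ∀ x, 0 < p x) : ∑ x, Lmap p x = 0 := by
  simp only [Lmap_apply_of_pos hp, sum_sub_distrib, ← mul_sum, sum_const, card_univ,
    nsmul_eq_mul, sub_self]

theorem Lmap_const_mul {p : A → ℝ} (hp : ∀ x, 0 < p x) {c : ℝ} (hc : 0 < c) :
    Lmap (fun x => c * p x) = Lmap p := by
  have hcp : ∀ x, 0 < c * p x := fun x => mul_pos hc (hp x)
  funext x
  simp only [Lmap_apply_of_pos hcp, Lmap_apply_of_pos hp, Real.log_mul hc.ne' (hp _).ne',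
    sum_add_distrib, sum_const, card_univ, nsmul_eq_mul]
  ring

theorem Lmap_exp_div_card {v : A → ℝ} (hv : ∑ x, v x = 0) :
    Lmap (fun x => Real.exp (v x / Fintype.card A)) = v := by
  funext x
  have hn : (Fintype.card A : ℝ) ≠ 0 := by
    have : 0 < Fintype.card A := Fintype.card_pos_iff.mpr ⟨x⟩
    positivity
  simp only [Lmap_apply_of_pos fun y => Real.exp_pos _, Real.log_exp, ← sum_div, hv, zero_div,
    sub_zero]
  field_simp

theorem isPPMF_div_sum [Nonempty A] {q : A → ℝ} (hq : ∀ x, 0 < q x) :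
    IsPPMF fun x => q x / ∑ y, q y := by
  have hS : 0 < ∑ y, q y := sum_pos (fun y _ => hq y) univ_nonempty
  exact ⟨fun x => div_pos (hq x) hS, by rw [← sum_div, div_self hS.ne']⟩

theorem range_Lmap [Nonempty A] :
    {v : A → ℝ | ∃ p : A → ℝ, IsPPMF p ∧ Lmap p = v} = {v : A → ℝ | ∑ i, v i = 0} := by
  ext v
  constructor
  · rintro ⟨p, ⟨hp, -⟩, rfl⟩
    exact sum_Lmap_eq_zero hp
  · intro hv
    set q : A → ℝ := fun x => Real.exp (v x / Fintype.card A)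
    have hq : ∀ x, 0 < q x := fun x => Real.exp_pos _
    have hS : 0 < (∑ y, q y)⁻¹ := inv_pos.mpr (sum_pos (fun y _ => hq y) univ_nonempty)
    refine ⟨fun x => q x / ∑ y, q y, isPPMF_div_sum hq, ?_⟩
    simp_rw [div_eq_inv_mul]
    rw [Lmap_const_mul hq hS, Lmap_exp_div_card hv]

end Lmap

theorem sumLM_surjective {A : Type*} [Fintype A] [Nonempty A] :
    Function.Surjective (sumLM A) := by
  classical
  intro r
  exact ⟨Pi.single (Classical.arbitrary A) r, by simp [sumLM]⟩

theorem finrank_ker_sumLM {A : Type*} [Fintype A] [Nonempty A] :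
    Module.finrank ℝ (LinearMap.ker (sumLM A)) = Fintype.card A - 1 := by
  have h := LinearMap.finrank_range_add_finrank_ker (sumLM A)
  rw [LinearMap.range_eq_top.mpr sumLM_surjective, finrank_top, Module.finrank_self,
    Module.finrank_fintype_fun_eq_card] at h
  omega

/-- The range of `L` on strictly positive PMFs is exactly the hyperplane of
zero-sum vectors in ℝ^|A|; consequently the vector space `V_A` (which `L` maps
isomorphically onto this hyperplane) has dimension `|A| - 1`. -/
theorem stmt_4 {A : Type*} [Fintype A] (hA : 2 ≤ Fintype.card A) :
    {v : A → ℝ | ∃ p : A → ℝ, IsPPMF p ∧ Lmap p = v} = {v : A → ℝ | ∑ i, v i = 0} ∧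
    Module.finrank ℝ (LinearMap.ker (sumLM A)) = Fintype.card A - 1 := by
  have : Nonempty A := Fintype.card_pos_iff.mp (by omega)
  exact ⟨range_Lmap, finrank_ker_sumLM⟩
end

section
/- Every strictly positive PMF p on F^N (F a finite field of order m) factorizes as p(x) = (1/Z) Π_{i=1}^{M} q_i(a_i·x), where a_1, …, a_M are representatives of the M = (m^N − 1)/(m − 1) one-dimensional subspaces of F^N, each q_i is a strictly positive PMF on F, and Z is a normalizing constant. -/
open Finset

/-- The dot product `a·x = Σ_k a_k x_k` over a field `F`. -/
def adot {F : Type*} [Field F] {N : ℕ} (a x : Fin N → F) : F :=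
  ∑ k, a k * x k

/-- The soft parity check interaction with coefficient vector `a` and
underlying PMF `q`: `p(x) = |F|^{-(N-1)} q(a·x)`. -/
noncomputable def spci {F : Type*} [Field F] [Fintype F] {N : ℕ}
    (a : Fin N → F) (q : F → ℝ) : (Fin N → F) → ℝ :=
  fun x => ((Fintype.card F : ℝ) ^ (N - 1))⁻¹ * q (adot a x)

/-- The `i`-th one-dimensional marginal of a joint PMF `p` on `F^N`. -/
noncomputable def marginal {F : Type*} [Field F] [Fintype F] [DecidableEq F] {N : ℕ}
    (p : (Fin N → F) → ℝ) (i : Fin N) : F → ℝ :=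
  fun t => ∑ x : Fin N → F, if x i = t then p x else 0

/-!
Take logarithms: with `L = log p` put `g_i(t) = Σ_{a_i·y = t} L y`. For `y ≠ x` the lines `a_i`
with `a_i·y = a_i·x` are those in the hyperplane `(y - x)^⊥`, and there are `K = M - m^(N-1)` of
them (each nonzero vector is `u • a_i` for exactly one `i` and unit `u`), so
`Σ_i g_i(a_i·x) = K Σ_y L y + m^(N-1) L x`. Hence `p` is proportional to
`Π_i exp (g_i(a_i·x) / m^(N-1))`, and normalizing each factor gives the `q_i`.
-/

theorem Module.Dual.card_filter_eq_zero {K V : Type*} [Field K] [Fintype K] [AddCommGroup V]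
    [Module K V] [Fintype V] {f : Module.Dual K V} (hf : f ≠ 0) [DecidablePred (f · = 0)] :
    #{v | f v = 0} = Fintype.card K ^ (Module.finrank K V - 1) := by
  classical
  rw [← f.finrank_ker_add_one_of_ne_zero hf, Nat.add_sub_cancel, ← Module.card_eq_pow_finrank,
    ← Fintype.card_subtype]
  exact Fintype.card_congr (Equiv.subtypeEquivRight fun v => LinearMap.mem_ker.symm)

section Lines

variable {F V ι : Type*} [Field F] [AddCommGroup V] [Module F V] {a : ι → V}

theorem injective_units_smul (h0 : ∀ i, a i ≠ 0) (hind : ∀ i j, i ≠ j → ∀ α : F, a i ≠ α • a j) :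
    Function.Injective fun p : ι × Fˣ => (p.2 : F) • a p.1 := by
  rintro ⟨i, u⟩ ⟨j, v⟩ h
  dsimp only at h
  obtain rfl : i = j := by
    by_contra hij
    apply hind i j hij ((u : F)⁻¹ * v)
    rw [mul_smul, ← h, inv_smul_smul₀ u.ne_zero]
  have huv : (u : F) = v := smul_left_injective F (h0 i) h
  rw [Units.ext huv]

theorem card_filter_mem_mul_add_one [Fintype F] [Fintype V] [Fintype ι] [DecidableEq V]
    (h0 : ∀ i, a i ≠ 0) (hind : ∀ i j, i ≠ j → ∀ α : F, a i ≠ α • a j)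
    (hcard : Fintype.card ι * (Fintype.card F - 1) + 1 = Fintype.card V)
    (W : Submodule F V) [DecidablePred (· ∈ W)] :
    #{i | a i ∈ W} * (Fintype.card F - 1) + 1 = #{v | v ∈ W} := by
  classical
  set e : ι × Fˣ → V := fun p => (p.2 : F) • a p.1
  have he : Function.Injective e := injective_units_smul h0 hind
  have himage : univ.image e = ({v | v ≠ 0} : Finset V) := by
    refine eq_of_subset_of_card_le (fun v hv => ?_) ?_
    · obtain ⟨⟨i, u⟩, -, rfl⟩ := mem_image.mp hv
      simpa [e] using smul_ne_zero u.ne_zero (h0 i)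
    · rw [card_image_of_injective _ he, filter_ne', card_erase_of_mem (mem_univ _), card_univ,
        card_univ, Fintype.card_prod, Fintype.card_units]
      omega
  have hsplit : #{v | v ∈ W} = #{v ∈ univ.image e | v ∈ W} + 1 := by
    rw [himage, filter_filter,
      ← card_insert_of_notMem (a := (0 : V)) (s := {v | v ≠ 0 ∧ v ∈ W}) (by simp)]
    congr 1
    ext v
    by_cases hv : v = 0 <;> simp [hv]
  rw [hsplit, filter_image, card_image_of_injective _ he]
  congr 1
  have hlines : ({p | e p ∈ W} : Finset (ι × Fˣ)) = ({i | a i ∈ W} : Finset ι) ×ˢ univ := by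
    ext ⟨i, u⟩
    simp [e]
  rw [hlines, card_product, card_univ, Fintype.card_units]

theorem card_filter_dual_apply_eq_zero_add [Fintype F] [Fintype V] [Fintype ι]
    (h0 : ∀ i, a i ≠ 0) (hind : ∀ i j, i ≠ j → ∀ α : F, a i ≠ α • a j)
    (hcard : Fintype.card ι * (Fintype.card F - 1) + 1 = Fintype.card V)
    {f : Module.Dual F V} (hf : f ≠ 0) [DecidablePred (f · = 0)] :
    #{i | f (a i) = 0} + Fintype.card F ^ (Module.finrank F V - 1) = Fintype.card ι := by
  classical
  have hlines := card_filter_mem_mul_add_one h0 hind hcard (LinearMap.ker f)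
  simp only [LinearMap.mem_ker] at hlines
  have hker := Module.Dual.card_filter_eq_zero hf
  have hV : Fintype.card V = Fintype.card F * Fintype.card F ^ (Module.finrank F V - 1) := by
    rw [Module.card_eq_pow_finrank (K := F), ← pow_succ', ← f.finrank_ker_add_one_of_ne_zero hf,
      Nat.add_sub_cancel]
  have hF : 1 < Fintype.card F := Fintype.one_lt_card
  refine Nat.eq_of_mul_eq_mul_right (m := Fintype.card F - 1) (by omega) ?_
  rw [hker] at hlines
  rw [hV] at hcard
  zify [hF.le] at hlines hcard ⊢
  linear_combination hlines - hcard

end Lines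

noncomputable def softmax {Y : Type*} [Fintype Y] (g : Y → ℝ) (t : Y) : ℝ :=
  Real.exp (g t) / ∑ s, Real.exp (g s)

theorem sum_exp_pos {Y : Type*} [Fintype Y] [Nonempty Y] (g : Y → ℝ) :
    0 < ∑ s, Real.exp (g s) :=
  sum_pos (fun _ _ => Real.exp_pos _) univ_nonempty

theorem isPPMF_softmax {Y : Type*} [Fintype Y] [Nonempty Y] (g : Y → ℝ) : IsPPMF (softmax g) :=
  ⟨fun t => div_pos (Real.exp_pos _) (sum_exp_pos g), by
    simp only [softmax]
    rw [← sum_div, div_self (sum_exp_pos g).ne']⟩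

section Factorization

variable {X Y ι : Type*} [Fintype X] [DecidableEq Y] [Fintype ι] {φ : ι → X → Y}

theorem sum_sum_fiber_eq {D : ℕ} (hφ : ∀ x y, y ≠ x → #{i | φ i y = φ i x} + D = Fintype.card ι)
    (L : X → ℝ) (x : X) :
    ∑ i, ∑ y with φ i y = φ i x, L y =
      (Fintype.card ι - D : ℝ) * ∑ y, L y + D * L x := by
  classical
  have hcount : ∀ y, (#{i | φ i y = φ i x} : ℝ) =
      (Fintype.card ι - D : ℝ) + if y = x then (D : ℝ) else 0 := by
    intro y
    by_cases hyx : y = x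
    · simp [hyx]
    · rw [if_neg hyx, ← hφ x y hyx]
      push_cast
      ring
  calc ∑ i, ∑ y with φ i y = φ i x, L y
      = ∑ y, (#{i | φ i y = φ i x} : ℝ) * L y := by
        simp_rw [sum_filter]
        rw [sum_comm]
        simp [← sum_filter]
    _ = (Fintype.card ι - D : ℝ) * ∑ y, L y + D * L x := by
        simp_rw [hcount, add_mul, sum_add_distrib, ← mul_sum, ite_mul, zero_mul, sum_ite_eq']
        simp

theorem exists_isPPMF_factorization [Fintype Y] [Nonempty Y] {D : ℕ} (hD : D ≠ 0)
    (hφ : ∀ x y, y ≠ x → #{i | φ i y = φ i x} + D = Fintype.card ι)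
    (p : X → ℝ) (hp : ∀ x, 0 < p x) :
    ∃ q : ι → Y → ℝ, (∀ i, IsPPMF (q i)) ∧
      ∃ Z : ℝ, 0 < Z ∧ ∀ x, p x = (1 / Z) * ∏ i, q i (φ i x) := by
  set L : X → ℝ := fun x => Real.log (p x)
  set g : ι → Y → ℝ := fun i t => (∑ y with φ i y = t, L y) / D
  set S : ι → ℝ := fun i => ∑ t, Real.exp (g i t)
  set c : ℝ := (Fintype.card ι - D : ℝ) * (∑ y, L y) / D
  refine ⟨fun i => softmax (g i), fun i => isPPMF_softmax (g i),
    Real.exp c / ∏ i, S i, div_pos (Real.exp_pos _) (prod_pos fun i _ => sum_exp_pos _), ?_⟩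
  intro x
  have hS : 0 < ∏ i, S i := prod_pos fun i _ => sum_exp_pos (g i)
  have hexponent : ∑ i, g i (φ i x) = c + L x := by
    simp only [g, c, ← sum_div, sum_sum_fiber_eq hφ]
    field_simp
  have hprod : ∏ i, softmax (g i) (φ i x) = Real.exp (c + L x) / ∏ i, S i := by
    rw [← hexponent, Real.exp_sum, ← prod_div_distrib]
    rfl
  rw [hprod, Real.exp_add, Real.exp_log (hp x)]
  field_simp

end Factorization

/-- Every strictly positive PMF `p` on `F^N` factorizes as
`p(x) = (1/Z) Π_i q_i(a_i·x)` over representatives `a_1, …, a_M` of the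
one-dimensional subspaces of `F^N`, with each `q_i` a strictly positive PMF on
`F` and `Z` a normalizing constant. -/
theorem stmt_16 {F : Type*} [Field F] [Fintype F] {N M : ℕ}
    (hM : M = (Fintype.card F ^ N - 1) / (Fintype.card F - 1))
    (a : Fin M → Fin N → F) (h0 : ∀ i, a i ≠ 0)
    (hind : ∀ i j, i ≠ j → ∀ α : F, a i ≠ α • a j)
    (p : (Fin N → F) → ℝ) (hp : IsPPMF p) :
    ∃ q : Fin M → F → ℝ, (∀ i, IsPPMF (q i)) ∧
      ∃ Z : ℝ, 0 < Z ∧ ∀ x, p x = (1 / Z) * ∏ i, q i (adot (a i) x) := by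
  classical
  have hcard : Fintype.card (Fin M) * (Fintype.card F - 1) + 1 = Fintype.card (Fin N → F) := by
    have hdvd : Fintype.card F - 1 ∣ Fintype.card F ^ N - 1 := by
      simpa using Nat.sub_dvd_pow_sub_pow (Fintype.card F) 1 N
    have : 1 ≤ Fintype.card F ^ N := Nat.one_le_pow _ _ Fintype.card_pos
    rw [Fintype.card_fin, Fintype.card_fun, Fintype.card_fin, hM, Nat.div_mul_cancel hdvd]
    omega
  refine exists_isPPMF_factorization (φ := fun i x => adot (a i) x)
    (pow_ne_zero (N - 1) (Fintype.card_ne_zero (α := F))) (fun x y hyx => ?_) p hp.1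
  have hf : dotProductEquiv F (Fin N) (y - x) ≠ 0 := by simpa [sub_eq_zero] using hyx
  have hfilter : #{i | adot (a i) y = adot (a i) x} =
      #{i | dotProductEquiv F (Fin N) (y - x) (a i) = 0} := by
    congr 1
    ext i
    simp [adot, ← dotProduct.eq_def, dotProduct_comm _ (a i), sub_eq_zero]
  rw [hfilter]
  simpa only [Module.finrank_fin_fun] using card_filter_dual_apply_eq_zero_add h0 hind hcard hf
end
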